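/- Let d ≥ 1 and let V be a nondegenerate k/κ-hermitian space of dimension 2d+1. Let W' ⊆ V be a special subspace of codimension d−1 (so dim W' = d+2). Then the number of special subspaces W ⊆ V of codimension 1 (i.e. dim W = 2d and W⊥ ⊆ W) with W' ⊆ W equals (q^{2(d−1)} − 1)/(q² − 1) = 1 + q² + q⁴ + ⋯ + q^{2(d−2)}; equivalently, W ↦ W⊥ is a bijection from this set onto the set of all lines in the (d−1)-dimensional totally isotropic subspace W'⊥. -/

import Mathlib

open Module

variable {k : Type*} [Field k] {V : Type*} [AddCommGroup V] [Module k V]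

/-- The orthogonal complement `U⊥ = {x : (x, u) = 0 for all u ∈ U}` of a subspace with
respect to a sesquilinear form (linear in the first variable). -/
def perp {σ : k →+* k} (h : V →ₗ[k] V →ₛₗ[σ] k) (U : Submodule k V) : Submodule k V where
  carrier := {x | ∀ u ∈ U, h x u = 0}
  add_mem' := by
    intro x y hx hy u hu
    simp [hx u hu, hy u hu]
  zero_mem' := by
    intro u hu
    simp
  smul_mem' := by
    intro a x hx u hu
    simp [hx u hu]

/-! Nondegeneracy makes `u ↦ (·, u)` a `σ`-semilinear injection of `V` into its dual, and `U⊥` is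
the annihilator of the image of `U`; hence `dim U⊥ + dim U = dim V`, and with hermitian symmetry
`U ↦ U⊥` is an inclusion-reversing involution. It therefore exchanges the hyperplanes containing
`W'` with the lines in `W'⊥`. Such a hyperplane `W` is automatically special
(`W⊥ ≤ W'⊥ ≤ W' ≤ W`), and the lines of the `(d - 1)`-dimensional space `W'⊥` are the points of a
projective space over a field with `q²` elements. -/

section Hermitian

variable {σ : k →+* k} (h : V →ₗ[k] V →ₛₗ[σ] k)

@[simp]
lemma mem_perp {U : Submodule k V} {x : V} : x ∈ perp h U ↔ ∀ u ∈ U, h x u = 0 := Iff.rfl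

lemma perp_antitone : Antitone (perp h) :=
  fun _ _ hU _ hx u hu => hx u (hU hu)

lemma flip_injective_of_hermitian (hherm : ∀ x y : V, h x y = σ (h y x))
    (hnd : ∀ x : V, (∀ y : V, h x y = 0) → x = 0) : Function.Injective h.flip := by
  refine (injective_iff_map_eq_zero h.flip).mpr fun u hu => hnd u fun y => ?_
  rw [hherm, ← LinearMap.flip_apply h, hu, LinearMap.zero_apply, map_zero]

lemma Submodule.finrank_map_of_injective {M N : Type*} [AddCommGroup M] [Module k M]
    [AddCommGroup N] [Module k N] [RingHomSurjective σ] {f : M →ₛₗ[σ] N}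
    (hf : Function.Injective f) (U : Submodule k M) :
    finrank k (U.map f) = finrank k U := by
  have := congrArg Cardinal.toNat <| lift_rank_eq_of_equiv_equiv σ
    (AddEquiv.ofBijective (f.submoduleMap U).toAddMonoidHom
      ⟨LinearMap.submoduleMap_injective hf U, f.submoduleMap_surjective U⟩)
    ⟨σ.injective, RingHomSurjective.is_surjective⟩ fun r m => (f.submoduleMap U).map_smulₛₗ r m
  simp only [Cardinal.toNat_lift] at this
  exact this.symm

lemma perp_eq_dualCoannihilator_map_flip [RingHomSurjective σ] (U : Submodule k V) :
    perp h U = (U.map h.flip).dualCoannihilator := by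
  ext x
  simp [Submodule.mem_dualCoannihilator]

lemma finrank_perp_add_finrank [RingHomSurjective σ] [FiniteDimensional k V]
    (hinj : Function.Injective h.flip) (U : Submodule k V) :
    finrank k (perp h U) + finrank k U = finrank k V := by
  rw [perp_eq_dualCoannihilator_map_flip, add_comm,
    ← Submodule.finrank_map_of_injective hinj U,
    Subspace.finrank_add_finrank_dualCoannihilator_eq]

lemma le_perp_perp (hherm : ∀ x y : V, h x y = σ (h y x)) (U : Submodule k V) :
    U ≤ perp h (perp h U) := by
  intro x hx u hu
  rw [hherm, hu x hx, map_zero]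

lemma perp_involutive [RingHomSurjective σ] [FiniteDimensional k V]
    (hherm : ∀ x y : V, h x y = σ (h y x)) (hinj : Function.Injective h.flip) :
    Function.Involutive (perp h) := by
  intro U
  refine (Submodule.eq_of_le_of_finrank_eq (le_perp_perp h hherm U) ?_).symm
  have := finrank_perp_add_finrank h hinj U
  have := finrank_perp_add_finrank h hinj (perp h U)
  omega

lemma bijOn_perp_hyperplanes_containing [RingHomSurjective σ] [FiniteDimensional k V]
    (hherm : ∀ x y : V, h x y = σ (h y x)) (hinj : Function.Injective h.flip) {n : ℕ}
    (hdim : finrank k V = n + 1) {W' : Submodule k V} (hW' : perp h W' ≤ W') :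
    Set.BijOn (perp h) {W | finrank k W = n ∧ perp h W ≤ W ∧ W' ≤ W}
      {L | finrank k L = 1 ∧ L ≤ perp h W'} := by
  have hinv := perp_involutive h hherm hinj
  refine Set.InvOn.bijOn ⟨fun W _ => hinv W, fun L _ => hinv L⟩ ?_ ?_
  · rintro W ⟨hWn, -, hW'W⟩
    have := finrank_perp_add_finrank h hinj W
    exact ⟨by omega, perp_antitone h hW'W⟩
  · rintro L ⟨hL1, hLW'⟩
    have := finrank_perp_add_finrank h hinj L
    refine ⟨by omega, ?_, ?_⟩
    · rw [hinv L]
      exact hLW'.trans (perp_antitone h (hLW'.trans hW'))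
    · simpa only [hinv W'] using perp_antitone h hLW'

end Hermitian

lemma card_lines_le [Finite k] (E : Submodule k V) :
    Nat.card {L : Submodule k V | finrank k L = 1 ∧ L ≤ E} =
      ∑ i ∈ Finset.range (finrank k E), Nat.card k ^ i := by
  let e : {L : Submodule k E // finrank k L = 1} ≃
      {L : Submodule k V | finrank k L = 1 ∧ L ≤ E} :=
    ((Submodule.MapSubtype.orderIso E).toEquiv.subtypeEquiv fun L => by
      simp [Submodule.MapSubtype.orderIso, Submodule.finrank_map_subtype_eq,
        Submodule.map_subtype_le]).trans (Equiv.subtypeSubtypeEquivSubtype And.right)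
  rw [← Nat.card_congr ((Projectivization.equivSubmodule k E).trans e),
    Projectivization.card_of_finrank k E rfl]

theorem card_special_hyperplanes_containing_general (q d : ℕ)
    [Fintype k] (hcard : Fintype.card k = q ^ 2)
    [FiniteDimensional k V] (hdim : finrank k V = 2 * d + 1)
    (σ : k →+* k)
    (h : V →ₗ[k] V →ₛₗ[σ] k)
    (hherm : ∀ x y : V, h x y = σ (h y x))
    (hnd : ∀ x : V, (∀ y : V, h x y = 0) → x = 0)
    (W' : Submodule k V) (hW' : perp h W' ≤ W') (hW'dim : finrank k W' = d + 2) :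
    Nat.card {W : Submodule k V | finrank k W = 2 * d ∧ perp h W ≤ W ∧ W' ≤ W} =
      ∑ i ∈ Finset.range (d - 1), q ^ (2 * i) ∧
    Set.BijOn (perp h)
      {W : Submodule k V | finrank k W = 2 * d ∧ perp h W ≤ W ∧ W' ≤ W}
      {L : Submodule k V | finrank k L = 1 ∧ L ≤ perp h W'} := by
  have : RingHomSurjective σ := ⟨Finite.injective_iff_surjective.mp σ.injective⟩
  have hinj := flip_injective_of_hermitian h hherm hnd
  have hbij := bijOn_perp_hyperplanes_containing h hherm hinj hdim hW'
  refine ⟨?_, hbij⟩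
  have hE : finrank k (perp h W') = d - 1 := by
    have := finrank_perp_add_finrank h hinj W'
    omega
  rw [Nat.card_congr hbij.equiv, card_lines_le, hE, Nat.card_eq_fintype_card, hcard]
  simp_rw [← pow_mul]

/-- Let `V` be a nondegenerate `k/κ`-hermitian space of dimension `2d+1`
and `W' ⊆ V` a special subspace of codimension `d-1`. The number of special subspaces `W`
of codimension `1` with `W' ⊆ W` equals `1 + q² + ⋯ + q^{2(d-2)}`; equivalently, `W ↦ W⊥`
is a bijection from this set onto the set of all lines in the totally isotropic subspace
`W'⊥`. -/
theorem card_special_hyperplanes_containing (q d : ℕ) (hd : 1 ≤ d)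
    [Fintype k] (hcard : Fintype.card k = q ^ 2)
    [FiniteDimensional k V] (hdim : finrank k V = 2 * d + 1)
    (σ : k →+* k) (hσ : ∀ x : k, σ x = x ^ q)
    (h : V →ₗ[k] V →ₛₗ[σ] k)
    (hherm : ∀ x y : V, h x y = σ (h y x))
    (hnd : ∀ x : V, (∀ y : V, h x y = 0) → x = 0)
    (W' : Submodule k V) (hW' : perp h W' ≤ W') (hW'dim : finrank k W' = d + 2) :
    Nat.card {W : Submodule k V | finrank k W = 2 * d ∧ perp h W ≤ W ∧ W' ≤ W} =
      ∑ i ∈ Finset.range (d - 1), q ^ (2 * i) ∧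
    Set.BijOn (perp h)
      {W : Submodule k V | finrank k W = 2 * d ∧ perp h W ≤ W ∧ W' ≤ W}
      {L : Submodule k V | finrank k L = 1 ∧ L ≤ perp h W'} :=
  card_special_hyperplanes_containing_general q d hcard hdim σ h hherm hnd W' hW' hW'dim
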